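/- arXiv:2009.11401 — 2 statements merged into one kernel-verified Lean document; each statement's English description precedes it below -/
import Mathlib

section
/- Let R ≥ 1, let λ denote Lebesgue measure on ℝ^R, and let a ∈ ℝ^R and r ≥ 0. Then ∫_{B̄(a,r)} exp(−‖x‖²/2) dλ(x) ≥ exp(−‖a‖²/2) · ∫_{B̄(0,r)} exp(−‖x‖²/2) dλ(x), where B̄(c,r) denotes the closed Euclidean ball of radius r centered at c. Equivalently, the standard Gaussian measure of a ball of radius r centered at a is at least exp(−‖a‖²/2) times that of the ball of the same radius centered at the origin. -/
/-!
Translating the ball `B̄(a, r)` to `B̄(0, r)` turns the integrand into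
`exp(-‖a‖²/2) · exp(-‖x‖²/2) · exp(-⟪x, a⟫)`. Since the centred ball and the Gaussian are symmetric
under `x ↦ -x`, the factor `exp(-⟪x, a⟫)` may be replaced by its even part `cosh ⟪x, a⟫ ≥ 1`.
-/

open MeasureTheory

section Symmetrization

variable {G : Type*} [MeasurableSpace G] [AddGroup G] [MeasurableNeg G]
  {μ : Measure G} [μ.IsNegInvariant] {s : Set G}

theorem setIntegral_comp_neg_of_neg_eq {E : Type*} [NormedAddCommGroup E] [NormedSpace ℝ E]
    (hs : -s = s) (g : G → E) : ∫ x in s, g (-x) ∂μ = ∫ x in s, g x ∂μ := by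
  have h := (Measure.measurePreserving_neg μ).setIntegral_preimage_emb
    (MeasurableEquiv.neg G).measurableEmbedding g s
  rwa [show Neg.neg ⁻¹' s = s from hs] at h

theorem MeasureTheory.IntegrableOn.comp_neg_of_neg_eq {E : Type*} [NormedAddCommGroup E]
    {g : G → E} (hs : -s = s) (hg : IntegrableOn g s μ) : IntegrableOn (fun x => g (-x)) s μ := by
  have h := ((Measure.measurePreserving_neg μ).integrableOn_comp_preimage
    (MeasurableEquiv.neg G).measurableEmbedding).2 hg
  rwa [show Neg.neg ⁻¹' s = s from hs] at h

theorem setIntegral_add_comp_neg_div_two (hs : -s = s) {g : G → ℝ} (hg : IntegrableOn g s μ) :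
    ∫ x in s, (g x + g (-x)) / 2 ∂μ = ∫ x in s, g x ∂μ := by
  rw [integral_div, integral_add hg (hg.comp_neg_of_neg_eq hs), setIntegral_comp_neg_of_neg_eq hs]
  ring

theorem setIntegral_le_setIntegral_mul_exp_of_odd (hs : -s = s) {f ℓ : G → ℝ}
    (hf_even : ∀ x, f (-x) = f x) (hℓ_odd : ∀ x, ℓ (-x) = -ℓ x) (hf_nonneg : ∀ x ∈ s, 0 ≤ f x)
    (hfℓ : IntegrableOn (fun x => f x * Real.exp (ℓ x)) s μ) :
    ∫ x in s, f x ∂μ ≤ ∫ x in s, f x * Real.exp (ℓ x) ∂μ := by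
  have h_avg : ∀ x, (f x * Real.exp (ℓ x) + f (-x) * Real.exp (ℓ (-x))) / 2
      = f x * Real.cosh (ℓ x) := fun x => by
    rw [hf_even, hℓ_odd, Real.cosh_eq]
    ring
  rw [← setIntegral_add_comp_neg_div_two hs hfℓ]
  simp only [h_avg]
  refine setIntegral_mono_of_nonneg hf_nonneg
    (fun x hx => le_mul_of_one_le_right (hf_nonneg x hx) (Real.one_le_cosh _)) ?_
  exact ((hfℓ.add (hfℓ.comp_neg_of_neg_eq hs)).div_const 2).congr (ae_of_all _ h_avg)

end Symmetrization

theorem exp_neg_norm_add_sq_div_two {E : Type*} [NormedAddCommGroup E] [InnerProductSpace ℝ E]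
    (x a : E) :
    Real.exp (-‖x + a‖ ^ 2 / 2)
      = Real.exp (-‖a‖ ^ 2 / 2) * (Real.exp (-‖x‖ ^ 2 / 2) * Real.exp (-inner ℝ x a)) := by
  rw [← Real.exp_add, ← Real.exp_add, norm_add_sq_real]
  ring_nf

theorem gaussian_shift_ball_lower_bound_general (R : ℕ)
    (a : EuclideanSpace ℝ (Fin R)) (r : ℝ) :
    Real.exp (-‖a‖ ^ 2 / 2) *
        ∫ x in Metric.closedBall (0 : EuclideanSpace ℝ (Fin R)) r, Real.exp (-‖x‖ ^ 2 / 2) ≤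
      ∫ x in Metric.closedBall a r, Real.exp (-‖x‖ ^ 2 / 2) := by
  set B := Metric.closedBall (0 : EuclideanSpace ℝ (Fin R)) r
  have hB : -B = B := by rw [neg_closedBall, neg_zero]
  have h_int : IntegrableOn
      (fun x => Real.exp (-‖x‖ ^ 2 / 2) * Real.exp (-inner ℝ x a)) B volume :=
    (Continuous.continuousOn (by fun_prop)).integrableOn_compact (isCompact_closedBall 0 r)
  calc Real.exp (-‖a‖ ^ 2 / 2) * ∫ x in B, Real.exp (-‖x‖ ^ 2 / 2)
      ≤ Real.exp (-‖a‖ ^ 2 / 2) *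
          ∫ x in B, Real.exp (-‖x‖ ^ 2 / 2) * Real.exp (-inner ℝ x a) := by
        refine mul_le_mul_of_nonneg_left ?_ (Real.exp_nonneg _)
        exact setIntegral_le_setIntegral_mul_exp_of_odd hB (fun x => by rw [norm_neg])
          (fun x => by rw [inner_neg_left, neg_neg]) (fun x _ => (Real.exp_pos _).le) h_int
    _ = ∫ x in B, Real.exp (-‖x + a‖ ^ 2 / 2) := by
        simp only [exp_neg_norm_add_sq_div_two _ a, integral_const_mul]
    _ = ∫ x in Metric.closedBall a r, Real.exp (-‖x‖ ^ 2 / 2) := by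
        rw [← (measurePreserving_add_right volume a).setIntegral_preimage_emb
          (MeasurableEquiv.addRight a).measurableEmbedding _ (Metric.closedBall a r),
          Metric.preimage_add_right_closedBall, sub_self]

/-- Gaussian shift inequality (consequence of Anderson's lemma):
the standard Gaussian integral over a ball of radius `r` centered at `a` is at least
`exp(−‖a‖²/2)` times that over the ball of the same radius centered at the origin. -/
theorem gaussian_shift_ball_lower_bound (R : ℕ) (hR : 1 ≤ R)
    (a : EuclideanSpace ℝ (Fin R)) (r : ℝ) (hr : 0 ≤ r) :
    Real.exp (-‖a‖ ^ 2 / 2) *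
        ∫ x in Metric.closedBall (0 : EuclideanSpace ℝ (Fin R)) r, Real.exp (-‖x‖ ^ 2 / 2) ≤
      ∫ x in Metric.closedBall a r, Real.exp (-‖x‖ ^ 2 / 2) :=
  gaussian_shift_ball_lower_bound_general R a r
end

section
/- For all real a > 0 and b > 0, ∫_{0}^{∞} z^{−3/2} · exp(−a z − b/z) dz = √(π/b) · exp(−2√(a b)). -/
/-!
After `z = t²` the integrand becomes `2 t⁻² exp (-a t² - b t⁻²)`, and with `α = √a`, `β = √b`,
`u t = α t - β / t`, one has `a t² + b t⁻² = (u t)² + 2 α β`. The map `u` is an increasing bijection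
of `(0, ∞)` onto `ℝ` with Jacobian `α + β t⁻²`, so this Jacobian integrates `exp (-u²)` to `√π`.
The involution `t ↦ (β / α) / t` reverses `u` and exchanges the two summands `α` and `β t⁻²` of the
Jacobian, hence `β t⁻²` alone contributes `√π / 2`.
-/

open MeasureTheory Real Set

variable {E : Type*} [NormedAddCommGroup E] [NormedSpace ℝ E]

theorem integral_Ioi_comp_sq (g : ℝ → E) :
    ∫ t in Ioi 0, (2 * t) • g (t ^ 2) = ∫ z in Ioi 0, g z := by
  have := integral_comp_rpow_Ioi_of_pos (g := g) two_pos
  norm_num at this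
  exact this

section Inversion

variable {c : ℝ}

theorem image_const_div_Ioi_zero (hc : 0 < c) : (c / ·) '' Ioi (0 : ℝ) = Ioi 0 := by
  refine Subset.antisymm (image_subset_iff.2 fun t ht => div_pos hc ht) fun t ht => ?_
  exact ⟨c / t, div_pos hc ht, div_div_cancel₀ hc.ne'⟩

theorem integral_Ioi_comp_const_div (hc : 0 < c) (f : ℝ → E) :
    ∫ t in Ioi 0, (c / t ^ 2) • f (c / t) = ∫ t in Ioi 0, f t := by
  have hderiv : ∀ t ∈ Ioi (0 : ℝ), HasDerivWithinAt (c / ·) (-(c / t ^ 2)) (Ioi 0) t := by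
    intro t ht
    have h := (hasDerivAt_inv (ne_of_gt ht)).const_mul c
    simp only [mul_neg, ← div_eq_mul_inv] at h
    exact h.hasDerivWithinAt
  have hinj : InjOn (c / ·) (Ioi (0 : ℝ)) := fun s _ t _ hst => by
    simpa only [div_div_cancel₀ hc.ne'] using congrArg (c / ·) hst
  calc ∫ t in Ioi 0, (c / t ^ 2) • f (c / t)
      = ∫ t in Ioi 0, |-(c / t ^ 2)| • f (c / t) := by
        simp only [abs_neg, abs_div, abs_sq, abs_of_pos hc]
    _ = ∫ t in (c / ·) '' Ioi 0, f t :=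
      (integral_image_eq_integral_abs_deriv_smul measurableSet_Ioi hderiv hinj f).symm
    _ = ∫ t in Ioi 0, f t := by rw [image_const_div_Ioi_zero hc]

end Inversion

noncomputable def cauchySchlomilch (α β t : ℝ) : ℝ := α * t - β / t

section CauchySchlomilch

variable {α β : ℝ}

theorem cauchySchlomilch_sq (α β : ℝ) {t : ℝ} (ht : t ≠ 0) :
    cauchySchlomilch α β t ^ 2 = α ^ 2 * t ^ 2 + β ^ 2 / t ^ 2 - 2 * α * β := by
  unfold cauchySchlomilch
  field_simp
  ring

theorem cauchySchlomilch_div_div (hα : α ≠ 0) (hβ : β ≠ 0) {t : ℝ} (ht : t ≠ 0) :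
    cauchySchlomilch α β (β / α / t) = -cauchySchlomilch α β t := by
  unfold cauchySchlomilch
  field_simp
  ring

theorem hasDerivAt_cauchySchlomilch (α β : ℝ) {t : ℝ} (ht : t ≠ 0) :
    HasDerivAt (cauchySchlomilch α β) (α + β / t ^ 2) t := by
  have h := ((hasDerivAt_id t).const_mul α).sub ((hasDerivAt_inv ht).const_mul β)
  simp only [mul_one, mul_neg, sub_neg_eq_add, ← div_eq_mul_inv] at h
  exact h

theorem continuousOn_cauchySchlomilch (α β : ℝ) : ContinuousOn (cauchySchlomilch α β) (Ioi 0) :=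
  fun _ ht => (hasDerivAt_cauchySchlomilch α β (ne_of_gt ht)).continuousAt.continuousWithinAt

theorem strictMonoOn_cauchySchlomilch (hα : 0 ≤ α) (hβ : 0 < β) :
    StrictMonoOn (cauchySchlomilch α β) (Ioi 0) := by
  intro s hs t ht hst
  have : β / t < β / s := div_lt_div_of_pos_left hβ hs hst
  have : α * s ≤ α * t := mul_le_mul_of_nonneg_left hst.le hα
  unfold cauchySchlomilch
  linarith

theorem image_cauchySchlomilch_Ioi_zero (hα : 0 < α) (hβ : 0 < β) :
    cauchySchlomilch α β '' Ioi 0 = univ := by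
  refine eq_univ_of_forall fun y => ?_
  -- `t` is the positive root of `α t² - y t - β`
  set s := √(y ^ 2 + 4 * α * β)
  have hs : s ^ 2 = y ^ 2 + 4 * α * β := sq_sqrt (by positivity)
  have hys : 0 < y + s := by nlinarith [sqrt_nonneg (y ^ 2 + 4 * α * β)]
  refine ⟨(y + s) / (2 * α), div_pos hys (by positivity), ?_⟩
  unfold cauchySchlomilch
  field_simp
  linear_combination hs

theorem integrableOn_Ioi_deriv_smul_comp_cauchySchlomilch_iff (hα : 0 < α) (hβ : 0 < β)
    (f : ℝ → E) :
    IntegrableOn (fun t => (α + β / t ^ 2) • f (cauchySchlomilch α β t)) (Ioi 0) ↔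
      Integrable f := by
  rw [← integrableOn_univ, ← image_cauchySchlomilch_Ioi_zero hα hβ,
    integrableOn_image_iff_integrableOn_abs_deriv_smul measurableSet_Ioi
      (fun t ht => (hasDerivAt_cauchySchlomilch α β (ne_of_gt ht)).hasDerivWithinAt)
      (strictMonoOn_cauchySchlomilch hα.le hβ).injOn]
  refine integrableOn_congr_fun (fun t (ht : 0 < t) => ?_) measurableSet_Ioi
  rw [abs_of_pos (by positivity)]

theorem integral_Ioi_deriv_smul_comp_cauchySchlomilch (hα : 0 < α) (hβ : 0 < β) (f : ℝ → E) :
    ∫ t in Ioi 0, (α + β / t ^ 2) • f (cauchySchlomilch α β t) = ∫ y, f y := by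
  have hchange := integral_image_eq_integral_abs_deriv_smul measurableSet_Ioi
    (fun t ht => (hasDerivAt_cauchySchlomilch α β (ne_of_gt ht)).hasDerivWithinAt)
    (strictMonoOn_cauchySchlomilch hα.le hβ).injOn f
  rw [image_cauchySchlomilch_Ioi_zero hα hβ, setIntegral_univ] at hchange
  rw [hchange]
  refine setIntegral_congr_fun measurableSet_Ioi fun t (ht : 0 < t) => ?_
  rw [abs_of_pos (by positivity)]

theorem integral_Ioi_div_sq_smul_comp_cauchySchlomilch_of_even (hα : 0 < α) (hβ : 0 < β)
    {f : ℝ → E} (hf : Function.Even f) :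
    ∫ t in Ioi 0, (β / t ^ 2) • f (cauchySchlomilch α β t) =
      ∫ t in Ioi 0, α • f (cauchySchlomilch α β t) := by
  rw [← integral_Ioi_comp_const_div (div_pos hβ hα)]
  refine setIntegral_congr_fun measurableSet_Ioi fun t ht => ?_
  have ht : t ≠ 0 := ne_of_gt ht
  rw [cauchySchlomilch_div_div hα.ne' hβ.ne' ht, hf, smul_smul]
  congr 1
  field_simp

theorem integral_Ioi_div_sq_smul_comp_cauchySchlomilch (hα : 0 < α) (hβ : 0 < β) {f : ℝ → E}
    (hf : Integrable f) (hcont : Continuous f) (heven : Function.Even f) :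
    ∫ t in Ioi 0, (β / t ^ 2) • f (cauchySchlomilch α β t) = (2 : ℝ)⁻¹ • ∫ y, f y := by
  set g := fun t => (β / t ^ 2) • f (cauchySchlomilch α β t)
  have hsum := (integrableOn_Ioi_deriv_smul_comp_cauchySchlomilch_iff hα hβ f).2 hf
  have hg : IntegrableOn g (Ioi 0) := by
    refine Integrable.mono hsum (ContinuousOn.aestronglyMeasurable ?_ measurableSet_Ioi) ?_
    · have hden : ∀ t ∈ Ioi (0 : ℝ), t ^ 2 ≠ 0 := fun t ht => pow_ne_zero 2 (ne_of_gt ht)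
      exact (continuousOn_const.div (continuousOn_pow 2) hden).smul
        (hcont.comp_continuousOn (continuousOn_cauchySchlomilch α β))
    · filter_upwards [ae_restrict_mem measurableSet_Ioi] with t (ht : 0 < t)
      rw [norm_smul, norm_smul]
      gcongr
      rw [norm_of_nonneg (by positivity), norm_of_nonneg (by positivity)]
      linarith
  have hrest : IntegrableOn (fun t => α • f (cauchySchlomilch α β t)) (Ioi 0) := by
    refine (hsum.sub hg).congr_fun (fun t _ => ?_) measurableSet_Ioi
    simp only [g, Pi.sub_apply, add_smul, add_sub_cancel_right]
  rw [← integral_Ioi_deriv_smul_comp_cauchySchlomilch hα hβ]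
  simp only [add_smul]
  rw [integral_add hrest hg, integral_Ioi_div_sq_smul_comp_cauchySchlomilch_of_even hα hβ heven,
    ← two_smul ℝ, smul_smul]
  norm_num

end CauchySchlomilch

/-- inverse-Gaussian normalizing constant: for `a, b > 0`,
`∫_0^∞ z^{−3/2} exp(−a z − b/z) dz = √(π/b) · exp(−2√(ab))`. -/
theorem inverse_gaussian_normalizing_constant (a b : ℝ) (ha : 0 < a) (hb : 0 < b) :
    ∫ z in Set.Ioi (0 : ℝ), z ^ (-(3 : ℝ) / 2) * Real.exp (-(a * z) - b / z) =
      Real.sqrt (Real.pi / b) * Real.exp (-2 * Real.sqrt (a * b)) := by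
  have hgauss : ∫ t in Ioi 0, (√b / t ^ 2) • exp (-cauchySchlomilch √a √b t ^ 2) =
      (2 : ℝ)⁻¹ • √π := by
    rw [integral_Ioi_div_sq_smul_comp_cauchySchlomilch (sqrt_pos.2 ha) (sqrt_pos.2 hb)
      (f := fun y => exp (-y ^ 2)) (by simpa using integrable_exp_neg_mul_sq one_pos)
      (by fun_prop) (fun y => by simp only [neg_sq])]
    simpa using integral_gaussian 1
  have hintegrand : ∀ t ∈ Ioi (0 : ℝ),
      (2 * t) • ((t ^ 2) ^ (-(3 : ℝ) / 2) * exp (-(a * t ^ 2) - b / t ^ 2)) =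
        (2 * exp (-2 * √(a * b)) / √b) • ((√b / t ^ 2) • exp (-cauchySchlomilch √a √b t ^ 2)) := by
    intro t (ht : 0 < t)
    have hexp : exp (-(a * t ^ 2) - b / t ^ 2) =
        exp (-2 * √(a * b)) * exp (-cauchySchlomilch √a √b t ^ 2) := by
      rw [← exp_add, cauchySchlomilch_sq _ _ ht.ne', sq_sqrt ha.le, sq_sqrt hb.le,
        sqrt_mul ha.le]
      ring_nf
    have hpow : (t ^ 2) ^ (-(3 : ℝ) / 2) = (t ^ 3)⁻¹ := by
      rw [← rpow_natCast, ← rpow_mul ht.le]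
      norm_num [rpow_neg ht.le]
    have hβ : 0 < √b := sqrt_pos.2 hb
    rw [hpow, hexp, smul_eq_mul, smul_eq_mul, smul_eq_mul]
    field_simp
  rw [← integral_Ioi_comp_sq, setIntegral_congr_fun measurableSet_Ioi hintegrand, integral_smul,
    hgauss, sqrt_div pi_pos.le, smul_eq_mul, smul_eq_mul]
  field_simp
end
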